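/- Inversion theorem: for sequences (f_n) and (g_n), one has f_n = Σ_{l=0}^{n} V_{m,λ}^{(r)}(n,l) g_l for all n if and only if g_n = Σ_{l=0}^{n} W_{m,λ}^{(r)}(n,l) f_l for all n. -/

import Mathlib

open Finset

/-- generalized falling factorial: (x)_{n,λ} = x(x-λ)···(x-(n-1)λ) -/
def dff (lam x : ℝ) (n : ℕ) : ℝ := ∏ i ∈ Finset.range n, (x - i * lam)

/-- generalized rising factorial: ⟨x⟩_{n,λ} = x(x+λ)···(x+(n-1)λ) -/
def drf (lam x : ℝ) (n : ℕ) : ℝ := ∏ i ∈ Finset.range n, (x + i * lam)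

/-!
Substituting the expansion of `(mx+r)_{k,λ}` in the basis `m^j (x)_j` into that of `m^n (x)_n`
expresses `m^n (x)_n` in this basis, which is linearly independent (evaluate at `x = 0, 1, 2, …`).
Hence `V W = 1` as lower-triangular matrices. Truncated to `n + 1` rows and columns these are
square matrices over a commutative ring, where a one-sided inverse is two-sided, so `W V = 1`
as well, and each direction of the inversion formula follows by substitution.
-/

theorem sum_range_sum_range_eq_sum_range_sum_Icc {M : Type*} [AddCommMonoid M] (n : ℕ)
    (t : ℕ → ℕ → M) :
    ∑ l ∈ range (n + 1), ∑ j ∈ range (l + 1), t l j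
      = ∑ j ∈ range (n + 1), ∑ l ∈ Icc j n, t l j :=
  sum_comm' fun l j => by simp only [mem_range, mem_Icc]; omega

section LowerInverse

variable {R : Type*} [CommSemiring R]

def IsLowerInverse (P Q : ℕ → ℕ → R) : Prop :=
  ∀ n, ∀ l ≤ n, ∑ k ∈ Icc l n, P n k * Q k l = if l = n then 1 else 0

def lowerTruncation (P : ℕ → ℕ → R) (n : ℕ) : Matrix (Fin (n + 1)) (Fin (n + 1)) R :=
  Matrix.of fun a b => if (b : ℕ) ≤ a then P a b else 0

theorem lowerTruncation_mul_apply (P Q : ℕ → ℕ → R) (n : ℕ) (i j : Fin (n + 1)) :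
    (lowerTruncation P n * lowerTruncation Q n) i j = ∑ k ∈ Icc (j : ℕ) i, P i k * Q k j := by
  simp only [Matrix.mul_apply, lowerTruncation, Matrix.of_apply]
  rw [Fin.sum_univ_eq_sum_range
    (fun k => (if k ≤ (i : ℕ) then P i k else 0) * (if (j : ℕ) ≤ k then Q k j else 0))]
  rw [← sum_subset (s₁ := Icc (j : ℕ) i)
    (fun k hk => by simp only [mem_Icc, mem_range] at hk ⊢; omega)
    (fun k _ hk => by simp only [mem_Icc] at hk; split_ifs <;> simp_all)]
  exact sum_congr rfl fun k hk => by simp only [mem_Icc] at hk; simp [hk.1, hk.2]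

theorem lowerTruncation_mul_eq_one_iff (P Q : ℕ → ℕ → R) (n : ℕ) :
    lowerTruncation P n * lowerTruncation Q n = 1 ↔
      ∀ i ≤ n, ∀ l ≤ i, ∑ k ∈ Icc l i, P i k * Q k l = if l = i then 1 else 0 := by
  constructor
  · intro h i hi l hl
    have hil := congrFun (congrFun h ⟨i, by omega⟩) ⟨l, by omega⟩
    rw [lowerTruncation_mul_apply, Matrix.one_apply] at hil
    simpa [Fin.ext_iff, eq_comm] using hil
  · intro h
    ext i j
    rw [lowerTruncation_mul_apply, Matrix.one_apply]
    by_cases hji : (j : ℕ) ≤ i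
    · rw [h i (by omega) j hji]
      simp [Fin.ext_iff, eq_comm]
    · rw [Icc_eq_empty (by omega), sum_empty, if_neg (by rw [Fin.ext_iff]; omega)]

theorem IsLowerInverse.symm {P Q : ℕ → ℕ → R} (h : IsLowerInverse P Q) : IsLowerInverse Q P := by
  intro n
  have hPQ := (lowerTruncation_mul_eq_one_iff P Q n).2 fun i _ => h i
  exact (lowerTruncation_mul_eq_one_iff Q P n).1 (mul_eq_one_comm.1 hPQ) n le_rfl

theorem IsLowerInverse.inversion {P Q : ℕ → ℕ → R} (h : IsLowerInverse P Q) {f g : ℕ → R}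
    (hf : ∀ n, f n = ∑ l ∈ range (n + 1), Q n l * g l) (n : ℕ) :
    g n = ∑ l ∈ range (n + 1), P n l * f l := by
  symm
  calc ∑ l ∈ range (n + 1), P n l * f l
      = ∑ l ∈ range (n + 1), ∑ j ∈ range (l + 1), P n l * (Q l j * g j) := by
        simp_rw [hf, mul_sum]
    _ = ∑ j ∈ range (n + 1), (∑ l ∈ Icc j n, P n l * Q l j) * g j := by
        rw [sum_range_sum_range_eq_sum_range_sum_Icc]
        simp_rw [sum_mul, mul_assoc]
    _ = g n := by
        rw [sum_congr rfl fun j hj => by rw [h n j (by rw [mem_range] at hj; omega)]]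
        simp [ite_mul]

end LowerInverse

theorem isLowerInverse_of_linearIndependent {R X : Type*} [CommRing R] {p q : ℕ → X → R}
    {V W : ℕ → ℕ → R} (hq : LinearIndependent R q)
    (hpq : ∀ n x, p n x = ∑ k ∈ range (n + 1), W n k * q k x)
    (hqp : ∀ n x, q n x = ∑ k ∈ range (n + 1), V n k * p k x) :
    IsLowerInverse V W := by
  intro n l hl
  have hexp : ∀ x, q n x = ∑ j ∈ range (n + 1), (∑ k ∈ Icc j n, V n k * W k j) * q j x := by
    intro x
    rw [hqp n x]
    simp_rw [hpq, mul_sum]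
    rw [sum_range_sum_range_eq_sum_range_sum_Icc]
    simp_rw [sum_mul, mul_assoc]
  refine sub_eq_zero.1 (linearIndependent_iff'.1 hq (range (n + 1))
    (fun j => (∑ k ∈ Icc j n, V n k * W k j) - if j = n then 1 else 0) ?_ l
    (mem_range.2 (by omega)))
  ext x
  simp [sub_mul, sum_sub_distrib, ite_mul, ← hexp]

theorem dff_one_natCast_eq_zero_of_lt {l k : ℕ} (h : l < k) : dff 1 (l : ℝ) k = 0 :=
  prod_eq_zero (mem_range.2 h) (by simp)

theorem dff_one_natCast_self_ne_zero (l : ℕ) : dff 1 (l : ℝ) l ≠ 0 :=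
  prod_ne_zero_iff.2 fun i hi => sub_ne_zero.2 <| by
    rw [mul_one]; exact_mod_cast (mem_range.1 hi).ne'

theorem linearIndependent_dff_one : LinearIndependent ℝ fun k (x : ℝ) => dff 1 x k := by
  refine linearIndependent_iff'.2 fun s c hc l => ?_
  induction l using Nat.strong_induction_on with
  | _ l ih =>
    intro hl
    have hsum := congrFun hc l
    rw [Finset.sum_apply, sum_eq_single_of_mem l hl fun k hk hkl => ?_] at hsum
    · simpa [dff_one_natCast_self_ne_zero] using hsum
    · rcases hkl.lt_or_gt with hlt | hgt
      · simp [ih k hlt hk]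
      · simp [dff_one_natCast_eq_zero_of_lt hgt]

theorem linearIndependent_pow_mul_dff_one {a : ℝ} (ha : a ≠ 0) :
    LinearIndependent ℝ fun k (x : ℝ) => a ^ k * dff 1 x k := by
  convert linearIndependent_dff_one.units_smul fun k => Units.mk0 (a ^ k) (pow_ne_zero k ha)
  simp

theorem stmt17 (m : ℕ) (hm : 0 < m) (r : ℕ) (lam : ℝ) (V W : ℕ → ℕ → ℝ) (f g : ℕ → ℝ)
    (hW : ∀ n : ℕ, ∀ x : ℝ,
      dff lam ((m : ℝ) * x + r) n = ∑ k ∈ range (n + 1), W n k * (m : ℝ) ^ k * dff 1 x k)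
    (hV : ∀ n : ℕ, ∀ x : ℝ,
      (m : ℝ) ^ n * dff 1 x n = ∑ k ∈ range (n + 1), V n k * dff lam ((m : ℝ) * x + r) k) :
    (∀ n : ℕ, f n = ∑ l ∈ range (n + 1), V n l * g l) ↔
    (∀ n : ℕ, g n = ∑ l ∈ range (n + 1), W n l * f l) := by
  have hVW : IsLowerInverse V W :=
    isLowerInverse_of_linearIndependent (p := fun k x => dff lam ((m : ℝ) * x + r) k)
      (linearIndependent_pow_mul_dff_one (Nat.cast_pos.2 hm).ne')
      (fun n x => by simp_rw [hW, mul_assoc]) hV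
  exact ⟨fun hf => hVW.symm.inversion hf, fun hg => hVW.inversion hg⟩
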